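/- arXiv:2312.11286 — 8 statements merged into one kernel-verified Lean document; each statement's English description precedes it below -/
import Mathlib

section
/- In the compact indifference model, let ω : N → H be an injective allocation satisfying ω(i) ≿_i ω(j) for all agents i, j. Then the probability that ω is envy-free equals ∏_{i∈N} 1 / |{ j ∈ N : ω(j) ~_i ω(i) }|. -/
/-!
For a single agent `i`, let `T` be the set of agents `j` whose house `ω j` is tied with `ω i`
under `≿_i`. Every linear extension of `≿_i` ranks exactly one house of `ω(T)` above the others
of `ω(T)`, and transposing two tied houses is an automorphism of `≿_i`, so it maps the linear
extensions with `ω t` on top bijectively onto those with `ω i` on top. Hence a fraction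
`1 / |T|` of the linear extensions puts `ω i` above the rest of `ω(T)`; since `ω i ≿_i ω j` for
every `j`, these are exactly the linear extensions under which `i` envies nobody. Independence
across agents turns the count into a product.
-/

/-- A strict linear order on `H`, given as a relation together with a proof that it is a
strict total order. -/
def StrictLinearOrder (H : Type*) : Type _ :=
  {r : H → H → Prop // IsStrictTotalOrder H r}

/-- A total preorder: a reflexive, transitive and total relation. -/
def IsTotalPreorderRel {H : Type*} (R : H → H → Prop) : Prop :=
  Reflexive R ∧ Transitive R ∧ ∀ a b : H, R a b ∨ R b a

/-- `r` is a linear extension of the (weak) relation `R`: whenever `a` is strictly preferred to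
`b` under `R`, `a` is ranked above `b` by `r`. -/
def IsLinearExtension {H : Type*} (R : H → H → Prop) (r : StrictLinearOrder H) : Prop :=
  ∀ a b : H, R a b → ¬ R b a → r.1 a b

open Function Finset

namespace StrictLinearOrder

variable {α β : Type*}

instance [Finite α] : Finite (StrictLinearOrder α) := by
  unfold StrictLinearOrder; infer_instance

def ofLinearOrder [LinearOrder α] : StrictLinearOrder α :=
  ⟨(· < ·), inferInstance⟩

def comap (f : α → β) (hf : Injective f) (r : StrictLinearOrder β) : StrictLinearOrder α :=
  ⟨r.1 on f, by have := r.2; exact hf.isStrictTotalOrder_onFun r.1⟩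

lemma comap_involutive {σ : α → α} (hσ : Involutive σ) :
    Involutive (comap σ hσ.injective) :=
  fun r => Subtype.ext <| funext₂ fun a b => by simp only [comap, onFun, hσ a, hσ b]

def IsTopAmong {T : Type*} (r : StrictLinearOrder β) (e : T → β) (t : T) : Prop :=
  ∀ s, s ≠ t → r.1 (e t) (e s)

lemma IsTopAmong.unique {T : Type*} {r : StrictLinearOrder β} {e : T → β} {t t' : T}
    (h : r.IsTopAmong e t) (h' : r.IsTopAmong e t') : t = t' := by
  by_contra hne
  have := r.2
  exact asymm_of r.1 (h t' (Ne.symm hne)) (h' t hne)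

lemma exists_isTopAmong {T : Type*} [Finite T] [Nonempty T] (r : StrictLinearOrder β)
    {e : T → β} (he : Injective e) : ∃ t, r.IsTopAmong e t := by
  classical
  let r' := r.comap e he
  have := r'.2
  let _ : LinearOrder T := linearOrderOfSTO r'.1
  obtain ⟨t, ht⟩ := Finite.exists_min (id : T → T)
  exact ⟨t, fun s hs => (ht s).resolve_left (Ne.symm hs)⟩

end StrictLinearOrder

open StrictLinearOrder

section LinearExtension

variable {H : Type*} {R : H → H → Prop}

lemma IsLinearExtension.comap {r : StrictLinearOrder H} (hr : IsLinearExtension R r)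
    {σ : H → H} (hσ : Injective σ) (hRσ : ∀ a b, R (σ a) (σ b) ↔ R a b) :
    IsLinearExtension R (r.comap σ hσ) :=
  fun a b hab hba => hr _ _ ((hRσ a b).2 hab) (mt (hRσ b a).1 hba)

lemma rel_swap_iff_of_rel [DecidableEq H] (hrefl : ∀ a, R a a)
    (htrans : ∀ ⦃a b c⦄, R a b → R b c → R a c)
    {x y : H} (hxy : R x y) (hyx : R y x) (a b : H) :
    R (Equiv.swap x y a) (Equiv.swap x y b) ↔ R a b := by
  have tie : ∀ c, R c (Equiv.swap x y c) ∧ R (Equiv.swap x y c) c := by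
    intro c
    rw [Equiv.swap_apply_def]
    split_ifs with hx hy
    · subst hx; exact ⟨hxy, hyx⟩
    · subst hy; exact ⟨hyx, hxy⟩
    · exact ⟨hrefl c, hrefl c⟩
  exact ⟨fun h => htrans (tie a).1 (htrans h (tie b).2),
    fun h => htrans (tie a).2 (htrans h (tie b).1)⟩

/-- Rank `a` by the number of elements `c` with `R c a`, breaking ties arbitrarily. -/
lemma exists_isLinearExtension [Finite H] (hrefl : ∀ a, R a a)
    (htrans : ∀ ⦃a b c⦄, R a b → R b c → R a c) :
    ∃ r : StrictLinearOrder H, IsLinearExtension R r := by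
  classical
  cases nonempty_fintype H
  let key : H → ℕ ×ₗ Fin (Fintype.card H) :=
    fun a => toLex (#{c | R c a}, Fintype.equivFin H a)
  have hkey : Injective key := fun a b h =>
    (Fintype.equivFin H).injective (congrArg (fun p => (ofLex p).2) h)
  refine ⟨ofLinearOrder.comap key hkey, fun a b hab hba => ?_⟩
  refine Prod.Lex.toLex_lt_toLex.2 (Or.inl (card_lt_card ?_))
  refine (ssubset_iff_of_subset fun c hc => ?_).2 ⟨b, ?_, ?_⟩
  · simp only [mem_filter, mem_univ, true_and] at hc ⊢
    exact htrans hc hab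
  · simpa using hrefl b
  · simpa using hba

end LinearExtension

section TieClass

variable {H T : Type*} {R : H → H → Prop} {e : T → H}

lemma isTopAmong_comap_swap [DecidableEq T] [DecidableEq H] (he : Injective e)
    {r : StrictLinearOrder H} {t : T} (h : r.IsTopAmong e t) (t₀ : T) :
    (r.comap (Equiv.swap (e t) (e t₀)) (Equiv.injective _)).IsTopAmong e t₀ := by
  intro s hs
  change r.1 (Equiv.swap (e t) (e t₀) (e t₀)) (Equiv.swap (e t) (e t₀) (e s))
  rw [Equiv.swap_apply_right, he.swap_apply]
  exact h _ fun hst => hs (by rwa [Equiv.swap_apply_eq_iff, Equiv.swap_apply_left] at hst)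

/-- Transposing the tied elements `e t` and `e t₀`. -/
def isTopAmongEquiv [DecidableEq T] [DecidableEq H] (hrefl : ∀ a, R a a)
    (htrans : ∀ ⦃a b c⦄, R a b → R b c → R a c) (he : Injective e)
    (htie : ∀ s t, R (e s) (e t)) (t t₀ : T) :
    {r // IsLinearExtension R r ∧ r.IsTopAmong e t} ≃
      {r // IsLinearExtension R r ∧ r.IsTopAmong e t₀} :=
  have hσ : Involutive (Equiv.swap (e t) (e t₀)) := Equiv.swap_apply_self _ _
  have hRσ := rel_swap_iff_of_rel hrefl htrans (htie t t₀) (htie t₀ t)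
  Equiv.subtypeEquiv (comap_involutive hσ).toPerm fun r =>
    ⟨fun ⟨hr, ht⟩ => ⟨hr.comap hσ.injective hRσ, isTopAmong_comap_swap he ht t₀⟩,
     fun ⟨hr, ht⟩ => by
      rw [← comap_involutive hσ r]
      refine ⟨hr.comap hσ.injective hRσ, ?_⟩
      have := isTopAmong_comap_swap he ht t
      rwa [Equiv.swap_comm] at this⟩

theorem card_isLinearExtension_eq_mul [Finite T] (hrefl : ∀ a, R a a)
    (htrans : ∀ ⦃a b c⦄, R a b → R b c → R a c) (he : Injective e)
    (htie : ∀ s t, R (e s) (e t)) (t₀ : T) :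
    Nat.card {r // IsLinearExtension R r} =
      Nat.card T * Nat.card {r // IsLinearExtension R r ∧ r.IsTopAmong e t₀} := by
  classical
  have : Nonempty T := ⟨t₀⟩
  choose top htop using fun r : {r // IsLinearExtension R r} => r.1.exists_isTopAmong he
  let partition : {r // IsLinearExtension R r} ≃
      Σ t, {r // IsLinearExtension R r ∧ r.IsTopAmong e t} :=
    { toFun := fun r => ⟨top r, r.1, r.2, htop r⟩
      invFun := fun p => ⟨p.2.1, p.2.2.1⟩
      left_inv := fun _ => rfl
      right_inv := fun ⟨t, r, hr, ht⟩ =>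
        Sigma.subtype_ext ((htop ⟨r, hr⟩).unique ht) rfl }
  rw [← Nat.card_prod, Nat.card_congr (partition.trans
    ((Equiv.sigmaCongrRight fun t => isTopAmongEquiv hrefl htrans he htie t t₀).trans
      (Equiv.sigmaEquivProd _ _)))]

end TieClass

theorem card_isLinearExtension_eq_card_tie_mul {N H : Type*} [Finite N] {R : H → H → Prop}
    (hrefl : ∀ a, R a a) (htrans : ∀ ⦃a b c⦄, R a b → R b c → R a c)
    {ω : N → H} (hω : Injective ω) {i : N} (hi : ∀ j, R (ω i) (ω j)) :
    Nat.card {r // IsLinearExtension R r} =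
      Nat.card {j : N // R (ω j) (ω i) ∧ R (ω i) (ω j)} *
        Nat.card {r // IsLinearExtension R r ∧ ∀ j, j ≠ i → r.1 (ω i) (ω j)} := by
  let T := {j : N // R (ω j) (ω i) ∧ R (ω i) (ω j)}
  have htie : ∀ s t : T, R (ω s) (ω t) := fun s t => htrans s.2.1 t.2.2
  rw [card_isLinearExtension_eq_mul hrefl htrans (hω.comp Subtype.val_injective) htie
    ⟨i, hrefl _, hrefl _⟩]
  refine congrArg _ (Nat.card_congr (Equiv.subtypeEquivRight fun r =>
    and_congr_right fun hr => ⟨fun h j hj => ?_, fun h s hs => h s (hs <| Subtype.ext ·)⟩))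
  by_cases hji : R (ω j) (ω i)
  · exact h ⟨j, hji, hi j⟩ fun hc => hj (congrArg Subtype.val hc)
  · exact hr _ _ (hi j) hji

/-- Compact indifference model: each agent `i` has a total preorder `R i` on houses and draws a
uniformly random strict linear extension of it, independently across agents.  If an injective
allocation `ω` satisfies `ω i ≿_i ω j` for all agents `i, j`, then the probability that `ω` is
envy-free (the fraction of profiles of linear extensions making `ω` envy-free) equals
`∏_i 1 / |{ j : ω j ~_i ω i }|`. -/
theorem stmt_1 {N H : Type*} [Fintype N] [Fintype H]
    (R : N → H → H → Prop) (hR : ∀ i, IsTotalPreorderRel (R i))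
    (ω : N → H) (hω : Function.Injective ω)
    (hweak : ∀ i j : N, R i (ω i) (ω j)) :
    (Nat.card {P : N → StrictLinearOrder H //
          (∀ i, IsLinearExtension (R i) (P i)) ∧
          (∀ i : N, ∀ j : N, j ≠ i → (P i).1 (ω i) (ω j))} : ℝ)
        / ∏ i : N, (Nat.card {r : StrictLinearOrder H // IsLinearExtension (R i) r} : ℝ)
      = ∏ i : N, 1 / (Nat.card {j : N // R i (ω j) (ω i) ∧ R i (ω i) (ω j)} : ℝ) := by
  have hfactor : {P : N → StrictLinearOrder H //
      (∀ i, IsLinearExtension (R i) (P i)) ∧ ∀ i j, j ≠ i → (P i).1 (ω i) (ω j)} ≃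
      ∀ i, {r // IsLinearExtension (R i) r ∧ ∀ j, j ≠ i → r.1 (ω i) (ω j)} :=
    (Equiv.subtypeEquivRight fun _ => forall_and.symm).trans <| Equiv.subtypePiEquivPi
      (p := fun i r => IsLinearExtension (R i) r ∧ ∀ j, j ≠ i → r.1 (ω i) (ω j))
  rw [Nat.card_congr hfactor, Nat.card_pi, Nat.cast_prod, ← prod_div_distrib]
  refine prod_congr rfl fun i _ => ?_
  obtain ⟨hrefl, htrans, -⟩ := hR i
  have hcount := card_isLinearExtension_eq_card_tie_mul hrefl htrans hω (hweak i)
  have hext : Nat.card {r // IsLinearExtension (R i) r} ≠ 0 :=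
    Nat.card_ne_zero.2 ⟨nonempty_subtype.2 (exists_isLinearExtension hrefl htrans), inferInstance⟩
  rw [hcount] at hext ⊢
  obtain ⟨htie, henvy⟩ := mul_ne_zero_iff.1 hext
  push_cast
  field_simp
end

section
/- Let 0 < ε ≤ 1 and consider the compact indifference model. If an injective allocation ω : N → H has EF-probability at least ε, then ∑_{i∈N} ( |{ j ∈ N : ω(j) ~_i ω(i) }| − 1 ) ≤ 1/ε; equivalently, the envy-matrix of ω (the N×N binary matrix with entry 1 at (i,j) exactly when ω(j) ~_i ω(i), which has all diagonal entries equal to 1) has at most 1/ε ones off the main diagonal. -/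
/-!
Fix an agent `i` and let `k i` be the size of the indifference class of `ω i` among the allocated
houses. Exchanging `ω i` with an indifferent `ω j` in a linear extension gives again a linear
extension, and turns one in which agent `i` ranks `ω i` first among the allocated houses into one
in which `ω j` is ranked first. Hence `(j, r) ↦ r.swap (ω i) (ω j)` is injective, and at most a
`1 / k i` fraction of the linear extensions of `≿_i` leave agent `i` envy-free. By independence
the EF-probability is at most `1 / ∏ i, k i`, and `∑ i, (k i - 1) ≤ ∏ i, k i`.
-/

namespace StrictLinearOrder

variable {H : Type*}

instance finite [Finite H] : Finite (StrictLinearOrder H) :=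
  Subtype.finite

def swap [DecidableEq H] (r : StrictLinearOrder H) (a b : H) : StrictLinearOrder H :=
  ⟨fun x y => r.1 (Equiv.swap a b x) (Equiv.swap a b y),
    haveI : IsStrictTotalOrder H r.1 := r.2
    { trichotomous := fun _ _ hxy hyx =>
        (Equiv.swap a b).injective <|
          (trichotomous_of r.1 _ _).resolve_left hxy |>.resolve_right hyx
      irrefl := fun _ => irrefl_of r.1 _
      trans := fun _ _ _ => trans_of r.1 }⟩

@[simp]
lemma swap_swap [DecidableEq H] (r : StrictLinearOrder H) (a b : H) :
    (r.swap a b).swap a b = r := by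
  refine Subtype.ext (funext₂ fun x y => ?_)
  simp only [swap, Equiv.swap_apply_self]

lemma asymm (r : StrictLinearOrder H) {a b : H} (hab : r.1 a b) (hba : r.1 b a) : False :=
  haveI : IsStrictTotalOrder H r.1 := r.2
  asymm_of r.1 hab hba

/-- Agent `i` does not envy anyone under `ω` when its realized preference is `r`. -/
def RanksFirst {N : Type*} (r : StrictLinearOrder H) (ω : N → H) (i : N) : Prop :=
  ∀ j, j ≠ i → r.1 (ω i) (ω j)

lemma RanksFirst.unique {N : Type*} {r : StrictLinearOrder H} {ω : N → H} {i j : N}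
    (hi : r.RanksFirst ω i) (hj : r.RanksFirst ω j) : i = j := by
  by_contra hne
  exact r.asymm (hi j (Ne.symm hne)) (hj i hne)

lemma RanksFirst.swap {N : Type*} [DecidableEq H] {r : StrictLinearOrder H} {ω : N → H}
    (hω : Function.Injective ω) {i : N} (hi : r.RanksFirst ω i) (j : N) :
    (r.swap (ω i) (ω j)).RanksFirst ω j := by
  intro m hmj
  change r.1 (Equiv.swap (ω i) (ω j) (ω j)) (Equiv.swap (ω i) (ω j) (ω m))
  rw [Equiv.swap_apply_right]
  rcases eq_or_ne m i with rfl | hmi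
  · rw [Equiv.swap_apply_left]
    exact hi j (Ne.symm hmj)
  · rw [Equiv.swap_apply_of_ne_of_ne (hω.ne hmi) (hω.ne hmj)]
    exact hi m hmi

end StrictLinearOrder

lemma IsLinearExtension.swap {H : Type*} [DecidableEq H] {R : H → H → Prop}
    (hR : IsTotalPreorderRel R) {a b : H} (hab : R a b) (hba : R b a) {r : StrictLinearOrder H}
    (hr : IsLinearExtension R r) : IsLinearExtension R (r.swap a b) := by
  obtain ⟨hrefl, htrans, -⟩ := hR
  have hindiff : ∀ u, R u (Equiv.swap a b u) ∧ R (Equiv.swap a b u) u := by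
    intro u
    rcases eq_or_ne u a with rfl | hua
    · rw [Equiv.swap_apply_left]; exact ⟨hab, hba⟩
    rcases eq_or_ne u b with rfl | hub
    · rw [Equiv.swap_apply_right]; exact ⟨hba, hab⟩
    rw [Equiv.swap_apply_of_ne_of_ne hua hub]; exact ⟨hrefl u, hrefl u⟩
  intro x y hxy hyx
  exact hr _ _ (htrans (hindiff x).2 (htrans hxy (hindiff y).1))
    fun h => hyx (htrans (hindiff y).1 (htrans h (hindiff x).2))

lemma card_indifferent_mul_card_ranksFirst_le {N H : Type*} [Finite H]
    {R : H → H → Prop} (hR : IsTotalPreorderRel R) {ω : N → H} (hω : Function.Injective ω)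
    (i : N) :
    Nat.card {j : N // R (ω j) (ω i) ∧ R (ω i) (ω j)} *
      Nat.card {r : StrictLinearOrder H // IsLinearExtension R r ∧ r.RanksFirst ω i} ≤
      Nat.card {r : StrictLinearOrder H // IsLinearExtension R r} := by
  classical
  rw [← Nat.card_prod]
  refine Nat.card_le_card_of_injective
    (fun p => ⟨p.2.1.swap (ω i) (ω p.1.1), p.2.2.1.swap hR p.1.2.2 p.1.2.1⟩) ?_
  rintro ⟨⟨j, _⟩, ⟨r, _, hr⟩⟩ ⟨⟨j', _⟩, ⟨r', _, hr'⟩⟩ h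
  have hswap : r.swap (ω i) (ω j) = r'.swap (ω i) (ω j') := congrArg Subtype.val h
  obtain rfl : j = j' := (hr.swap hω j).unique (hswap ▸ hr'.swap hω j')
  obtain rfl : r = r' := by
    simpa only [StrictLinearOrder.swap_swap] using congrArg (·.swap (ω i) (ω j)) hswap
  rfl

lemma card_envyFree_eq_prod {N H : Type*} [Fintype N] (R : N → H → H → Prop) (ω : N → H) :
    Nat.card {P : N → StrictLinearOrder H //
        (∀ i, IsLinearExtension (R i) (P i)) ∧
        (∀ i : N, ∀ j : N, j ≠ i → (P i).1 (ω i) (ω j))} =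
      ∏ i, Nat.card
        {r : StrictLinearOrder H // IsLinearExtension (R i) r ∧ r.RanksFirst ω i} := by
  rw [← Nat.card_pi]
  exact Nat.card_congr <| (Equiv.subtypeEquivRight fun _ => forall_and.symm).trans
    (Equiv.subtypePiEquivPi (p := fun i r => IsLinearExtension (R i) r ∧ r.RanksFirst ω i))

lemma div_le_one_div_of_mul_le {α : Type*} [Field α] [LinearOrder α] [IsStrictOrderedRing α]
    {a b c : α} (ha : 0 ≤ a) (hc : 0 < c) (h : c * a ≤ b) : a / b ≤ 1 / c := by
  rcases (mul_nonneg hc.le ha |>.trans h).eq_or_lt with hb | hb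
  · rw [← hb, div_zero]
    positivity
  · rw [div_le_div_iff₀ hb hc]
    linarith

lemma Finset.sum_sub_one_le_prod_sub_one {ι α : Type*} [CommRing α] [LinearOrder α]
    [IsStrictOrderedRing α] (s : Finset ι) {f : ι → α} (hf : ∀ i ∈ s, 1 ≤ f i) :
    ∑ i ∈ s, (f i - 1) ≤ ∏ i ∈ s, f i - 1 := by
  induction s using Finset.cons_induction with
  | empty => simp
  | cons a s ha ih =>
    rw [Finset.sum_cons, Finset.prod_cons]
    have hfa : 1 ≤ f a := hf a (Finset.mem_cons_self a s)
    have hs := ih fun i hi => hf i (Finset.mem_cons_of_mem hi)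
    have hprod : 1 ≤ ∏ i ∈ s, f i :=
      Finset.one_le_prod fun i hi => hf i (Finset.mem_cons_of_mem hi)
    nlinarith

theorem stmt_2_general {N H : Type*} [Fintype N] [Fintype H]
    (R : N → H → H → Prop) (hR : ∀ i, IsTotalPreorderRel (R i))
    (ω : N → H) (hω : Function.Injective ω)
    (ε : ℝ) (hε0 : 0 < ε)
    (hprob : ε ≤
      (Nat.card {P : N → StrictLinearOrder H //
            (∀ i, IsLinearExtension (R i) (P i)) ∧
            (∀ i : N, ∀ j : N, j ≠ i → (P i).1 (ω i) (ω j))} : ℝ)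
        / ∏ i : N, (Nat.card {r : StrictLinearOrder H // IsLinearExtension (R i) r} : ℝ)) :
    ∑ i : N, ((Nat.card {j : N // R i (ω j) (ω i) ∧ R i (ω i) (ω j)} : ℝ) - 1) ≤ 1 / ε := by
  set k : N → ℕ := fun i => Nat.card {j : N // R i (ω j) (ω i) ∧ R i (ω i) (ω j)}
  have hk : ∀ i, (1 : ℝ) ≤ k i := fun i =>
    haveI : Nonempty {j : N // R i (ω j) (ω i) ∧ R i (ω i) (ω j)} :=
      ⟨⟨i, (hR i).1 (ω i), (hR i).1 (ω i)⟩⟩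
    Nat.one_le_cast.mpr Nat.card_pos
  have hprob_le : ε ≤ 1 / ∏ i, (k i : ℝ) := by
    refine hprob.trans ?_
    rw [card_envyFree_eq_prod, Nat.cast_prod, ← Finset.prod_div_distrib, one_div,
      ← Finset.prod_inv_distrib]
    refine Finset.prod_le_prod (fun i _ => by positivity) fun i _ => ?_
    rw [← one_div]
    exact div_le_one_div_of_mul_le (by positivity) (by linarith [hk i])
      (by exact_mod_cast card_indifferent_mul_card_ranksFirst_le (hR i) hω i)
  have hk_prod : ∏ i, (k i : ℝ) ≤ 1 / ε :=
    (le_one_div hε0 (Finset.prod_pos fun i _ => by linarith [hk i])).mp hprob_le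
  calc ∑ i, ((k i : ℝ) - 1)
      _ ≤ ∏ i, (k i : ℝ) - 1 := Finset.univ.sum_sub_one_le_prod_sub_one fun i _ => hk i
      _ ≤ 1 / ε := by linarith

/-- Compact indifference model: if an injective allocation `ω` has EF-probability (the fraction
of profiles of linear extensions of the agents' total preorders making `ω` envy-free) at least
`ε`, where `0 < ε ≤ 1`, then `∑_i (|{ j : ω j ~_i ω i }| − 1) ≤ 1/ε`, i.e. the envy-matrix of
`ω` has at most `1/ε` ones off the main diagonal. -/
theorem stmt_2 {N H : Type*} [Fintype N] [Fintype H]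
    (R : N → H → H → Prop) (hR : ∀ i, IsTotalPreorderRel (R i))
    (ω : N → H) (hω : Function.Injective ω)
    (ε : ℝ) (hε0 : 0 < ε) (hε1 : ε ≤ 1)
    (hprob : ε ≤
      (Nat.card {P : N → StrictLinearOrder H //
            (∀ i, IsLinearExtension (R i) (P i)) ∧
            (∀ i : N, ∀ j : N, j ≠ i → (P i).1 (ω i) (ω j))} : ℝ)
        / ∏ i : N, (Nat.card {r : StrictLinearOrder H // IsLinearExtension (R i) r} : ℝ)) :
    ∑ i : N, ((Nat.card {j : N // R i (ω j) (ω i) ∧ R i (ω i) (ω j)} : ℝ) - 1) ≤ 1 / ε :=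
  stmt_2_general R hR ω hω ε hε0 hprob
end

section
/- Let each agent i ∈ N have a total preorder ≿_i on the finite set H, and let ω : N → H be injective. There exist strict linear orders ≻_i on H, each a linear extension of ≿_i, under which ω is envy-free, if and only if ω(i) ≿_i ω(j) for all agents i and j. (Equivalently, under the compact indifference model, ω has positive EF-probability if and only if ω(i) ≿_i ω(j) for all i, j.) -/
/-!
If `ω i ≿ᵢ ω j` for all `i, j`, break the ties of `≿ᵢ` by a strict total order that puts
`ω i` on top: then `ω i` beats every other house. That tie-breaking order is itself obtained by
refining the two-class preorder "`ω i` above everything else" with a well-order of `H`.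
Conversely, in any linear extension, `ω i ≻ᵢ ω j` rules out `ω j` being strictly preferred.
-/

section

variable {H : Type*}

def lexRefine (R t : H → H → Prop) (a b : H) : Prop :=
  R a b ∧ (¬ R b a ∨ t a b)

def topAt (x a b : H) : Prop :=
  b = x → a = x

theorem isTotalPreorderRel_topAt (x : H) : IsTotalPreorderRel (topAt x) :=
  ⟨fun _ => id, fun _ _ _ hab hbc hc => hab (hbc hc), fun a _ => (em (a = x)).imp
    (fun ha _ => ha) fun ha hax => absurd hax ha⟩

theorem lexRefine_topAt_of_ne {x b : H} (t : H → H → Prop) (hb : b ≠ x) :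
    lexRefine (topAt x) t x b :=
  ⟨fun _ => rfl, Or.inl fun hbx => hb (hbx rfl)⟩

namespace IsTotalPreorderRel

variable {R : H → H → Prop} (hR : IsTotalPreorderRel R)
include hR

theorem isStrictTotalOrder_lexRefine (t : H → H → Prop) [IsStrictTotalOrder H t] :
    IsStrictTotalOrder H (lexRefine R t) where
  irrefl a h := h.2.elim (· (hR.1 a)) (irrefl a)
  trans a b c hab hbc := by
    refine ⟨hR.2.1 hab.1 hbc.1, or_iff_not_imp_left.2 fun hca => ?_⟩
    have hba : R b a := hR.2.1 hbc.1 (not_not.1 hca)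
    have hcb : R c b := hR.2.1 (not_not.1 hca) hab.1
    exact _root_.trans (hab.2.resolve_left (not_not.2 hba)) (hbc.2.resolve_left (not_not.2 hcb))
  trichotomous a b hnab hnba := by
    have hab : R a b := by
      by_contra h
      exact hnba ⟨(hR.2.2 a b).resolve_left h, Or.inl h⟩
    have hba : R b a := by
      by_contra h
      exact hnab ⟨hab, Or.inl h⟩
    exact ((trichotomous_of t a b).resolve_left fun h => hnab ⟨hab, Or.inr h⟩).resolve_right
      fun h => hnba ⟨hba, Or.inr h⟩

def linearExtension (t : H → H → Prop) [IsStrictTotalOrder H t] : StrictLinearOrder H :=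
  ⟨lexRefine R t, hR.isStrictTotalOrder_lexRefine t⟩

theorem isLinearExtension_linearExtension (t : H → H → Prop) [IsStrictTotalOrder H t] :
    IsLinearExtension R (hR.linearExtension t) :=
  fun _ _ hab hba => ⟨hab, Or.inl hba⟩

theorem rel_of_isLinearExtension {r : StrictLinearOrder H} (hr : IsLinearExtension R r)
    {a b : H} (hab : r.1 a b) : R a b := by
  have := r.2
  by_contra h
  exact asymm hab (hr b a ((hR.2.2 a b).resolve_left h) h)

end IsTotalPreorderRel

end

theorem stmt_4_general {N H : Type*}
    (R : N → H → H → Prop) (hR : ∀ i, IsTotalPreorderRel (R i))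
    (ω : N → H) (hω : Function.Injective ω) :
    (∃ P : N → StrictLinearOrder H,
        (∀ i, IsLinearExtension (R i) (P i)) ∧
        (∀ i : N, ∀ j : N, j ≠ i → (P i).1 (ω i) (ω j))) ↔
    (∀ i j : N, R i (ω i) (ω j)) := by
  constructor
  · rintro ⟨P, hext, hef⟩ i j
    rcases eq_or_ne j i with rfl | hji
    · exact (hR j).1 _
    · exact (hR i).rel_of_isLinearExtension (hext i) (hef i j hji)
  · intro hpref
    let tieBreak (i : N) : H → H → Prop := lexRefine (topAt (ω i)) WellOrderingRel
    have (i : N) : IsStrictTotalOrder H (tieBreak i) :=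
      (isTotalPreorderRel_topAt (ω i)).isStrictTotalOrder_lexRefine _
    refine ⟨fun i => (hR i).linearExtension (tieBreak i),
      fun i => (hR i).isLinearExtension_linearExtension _, fun i j hji => ⟨hpref i j, Or.inr ?_⟩⟩
    exact lexRefine_topAt_of_ne _ fun h => hji (hω h)

/-- Let each agent `i` have a total preorder `R i` on the finite set `H` and let `ω` be an
injective allocation.  There is a profile of strict linear extensions of the agents' preorders
under which `ω` is envy-free if and only if `ω i ≿_i ω j` for all agents `i, j`.  (Equivalently,
under the compact indifference model, `ω` has positive EF-probability iff `ω i ≿_i ω j` for all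
`i, j`.) -/
theorem stmt_4 {N H : Type*} [Finite H]
    (R : N → H → H → Prop) (hR : ∀ i, IsTotalPreorderRel (R i))
    (ω : N → H) (hω : Function.Injective ω) :
    (∃ P : N → StrictLinearOrder H,
        (∀ i, IsLinearExtension (R i) (P i)) ∧
        (∀ i : N, ∀ j : N, j ≠ i → (P i).1 (ω i) (ω j))) ↔
    (∀ i j : N, R i (ω i) (ω j)) :=
  stmt_4_general R hR ω hω
end

section
/- Let E be a finite set, let S_1, …, S_d be subsets of E, and let q, ℓ be positive integers with q ≤ |E| and ℓ ≤ d; set k = |E| − q + d and r = |E| − q + d − ℓ. Consider the house-allocation instance with agent set N = { a_e : e ∈ E } ∪ { a*_t : t ∈ {1,…,d} }, house set H = { h*_t : t ∈ {1,…,d} } ∪ { h_s : s ∈ {1,…,r} }, and binary preferences given by A_{a_e} = { h*_t : e ∈ S_t } for each e ∈ E and A_{a*_t} = { h*_t } for each t. Then there exists a partial allocation ω whose domain consists of exactly k agents and in which every allocated agent is envy-free, if and only if there exists I ⊆ {1,…,d} with |I| = ℓ and |⋃_{t∈I} S_t| ≤ q. -/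
/-- The binary preferences of the house-allocation instance built from a Minimum Coverage
input.  Agents are `E ⊕ Fin d` (`Sum.inl e` is agent `a_e`, `Sum.inr t` is agent `a*_t`);
houses are `Fin d ⊕ Fin r` (`Sum.inl t` is house `h*_t`, `Sum.inr s` is house `h_s`).
`covPref d r S i` is the set `A_i` of houses preferred by agent `i`. -/
def covPref {E : Type*} (d r : ℕ) (S : Fin d → Finset E) :
    E ⊕ Fin d → Set (Fin d ⊕ Fin r) :=
  Sum.elim (fun e => {h | ∃ t : Fin d, e ∈ S t ∧ h = Sum.inl t})
           (fun t => {h | h = Sum.inl t})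

/-!
Suppose an envy-free allocation serves `k` agents. At most `r` of them receive a dummy house
`h_s`, so the set `I` of allocated starred houses has at least `k - r = ℓ` elements. Every
agent `a_e` with `e ∈ ⋃_{t ∈ I} S_t` and every `a*_t` with `t ∈ I` likes an allocated house,
hence, if allocated, receives one of the `|I|` houses `h*_t` with `t ∈ I`. Since only
`|E| + d - k = q` agents are unallocated, `|⋃_{t ∈ I} S_t| ≤ q`.

Conversely, enlarge `⋃_{t ∈ I} S_t` to a set `C` of size `q`, leave the agents `a_e` with
`e ∈ C` unallocated, give `h*_t` to `a*_t` for `t ∈ I`, and the `r` dummy houses to the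
remaining agents: none of these likes an allocated house.
-/

open Finset

def IsEnvyFree {N H : Type*} (A : N → Set H) (D : Finset N) (ω : N → H) : Prop :=
  ∀ i ∈ D, ω i ∈ A i ∨ ∀ j ∈ D, ω j ∉ A i

namespace IsEnvyFree

variable {N H : Type*} {A : N → Set H} {D : Finset N} {ω : N → H}

theorem apply_mem_of_apply_mem (hEF : IsEnvyFree A D ω) {i j : N} (hi : i ∈ D) (hj : j ∈ D)
    (hji : ω j ∈ A i) : ω i ∈ A i :=
  (hEF i hi).resolve_right fun h => h j hj hji

theorem card_inter_le [DecidableEq N] (hEF : IsEnvyFree A D ω) (hinj : Set.InjOn ω D)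
    {X : Finset N} {U : Finset H} (hX : ∀ i ∈ X, ∃ j ∈ D, ω j ∈ A i)
    (hU : ∀ i ∈ X, ∀ j ∈ D, ω j ∈ A i → ω j ∈ U) : #(X ∩ D) ≤ #U := by
  refine card_le_card_of_injOn ω (fun i hi => ?_) (hinj.mono fun i hi => (mem_inter.1 hi).2)
  obtain ⟨hiX, hiD⟩ := mem_inter.1 hi
  obtain ⟨j, hjD, hji⟩ := hX i hiX
  exact hU i hiX i hiD (hEF.apply_mem_of_apply_mem hiD hjD hji)

end IsEnvyFree

theorem card_le_card_toLeft_image_add {N α β : Type*} [DecidableEq α] [DecidableEq β]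
    [Fintype β] {D : Finset N} {ω : N → α ⊕ β} (hinj : Set.InjOn ω D) :
    #D ≤ #(D.image ω).toLeft + Fintype.card β := by
  rw [← card_image_of_injOn hinj, ← card_toLeft_add_card_toRight]
  exact Nat.add_le_add_left (card_le_univ _) _

section Reduction

variable {E : Type*} [Fintype E] [DecidableEq E] {d r : ℕ} (S : Fin d → Finset E)

theorem card_biUnion_toLeft_image_add_card_le {D : Finset (E ⊕ Fin d)}
    {ω : E ⊕ Fin d → Fin d ⊕ Fin r} (hinj : Set.InjOn ω D)
    (hEF : IsEnvyFree (covPref d r S) D ω) :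
    #(((D.image ω).toLeft).biUnion S) + #D ≤ Fintype.card E + d := by
  set I := (D.image ω).toLeft
  have hI : ∀ t ∈ I, ∃ j ∈ D, ω j = Sum.inl t := by simp [I]
  set X := (I.biUnion S).disjSum I
  have hXD : #(X ∩ D) ≤ #(I.map .inl : Finset (Fin d ⊕ Fin r)) := by
    refine hEF.card_inter_le hinj (fun i hi => ?_) fun i _ j hj hji => ?_
    · rcases i with e | t
      · obtain ⟨t, ht, he⟩ := mem_biUnion.1 (inl_mem_disjSum.1 hi)
        obtain ⟨j, hj, hωj⟩ := hI t ht
        exact ⟨j, hj, t, he, hωj⟩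
      · exact hI t (inr_mem_disjSum.1 hi)
    · obtain ⟨t, hωj⟩ : ∃ t, ω j = Sum.inl t := by
        rcases i with e | t
        · obtain ⟨t, -, h⟩ := hji; exact ⟨t, h⟩
        · exact ⟨t, hji⟩
      rw [hωj]
      exact mem_map_of_mem _ (mem_toLeft.2 (hωj ▸ mem_image_of_mem ω hj))
  have hXD' : #(X \ D) ≤ #Dᶜ := card_le_card fun i hi => by simp [(mem_sdiff.1 hi).2]
  have hcard : #(I.biUnion S) + #I ≤ #I + #Dᶜ := calc
    #(I.biUnion S) + #I = #(X ∩ D) + #(X \ D) := by rw [card_inter_add_card_sdiff, card_disjSum]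
    _ ≤ #I + #Dᶜ := add_le_add (hXD.trans_eq (card_map _)) hXD'
  calc #(I.biUnion S) + #D ≤ #Dᶜ + #D := by omega
    _ = Fintype.card E + d := by simp [card_compl_add_card]

/-- `σ` hands out the dummy houses `h_s`. The agents `a_e` with `e ∈ C` are meant to stay
unallocated, so their value `inl 0` is a placeholder. -/
def coverAllocation [NeZero d] {C : Finset E} {I : Finset (Fin d)}
    (σ : {e // e ∉ C} ⊕ {t // t ∉ I} ≃ Fin r) : E ⊕ Fin d → Fin d ⊕ Fin r
  | .inl e => if h : e ∈ C then .inl 0 else .inr (σ (.inl ⟨e, h⟩))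
  | .inr t => if h : t ∈ I then .inl t else .inr (σ (.inr ⟨t, h⟩))

variable [NeZero d] {C : Finset E} {I : Finset (Fin d)}
  (σ : {e // e ∉ C} ⊕ {t // t ∉ I} ≃ Fin r)

theorem coverAllocation_eq_inl {i : E ⊕ Fin d} (hi : i ∈ Cᶜ.disjSum univ) {t : Fin d}
    (h : coverAllocation σ i = .inl t) : i = .inr t ∧ t ∈ I := by
  rcases i with e | t'
  · have he : e ∉ C := by simpa using hi
    simp [coverAllocation, he] at h
  · by_cases ht' : t' ∈ I <;> simp_all [coverAllocation]

theorem injOn_coverAllocation :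
    Set.InjOn (coverAllocation σ) ↑(Cᶜ.disjSum (univ : Finset (Fin d))) := by
  rintro (e | t) hi (e' | t') hj h <;>
    simp only [coverAllocation] at h <;> split_ifs at h <;> simp_all

theorem isEnvyFree_coverAllocation (hIC : I.biUnion S ⊆ C) :
    IsEnvyFree (covPref d r S) (Cᶜ.disjSum univ) (coverAllocation σ) := by
  rintro (e | t) hi
  · refine .inr fun j hj ⟨t, het, hjt⟩ => ?_
    obtain ⟨rfl, ht⟩ := coverAllocation_eq_inl σ hj hjt
    exact (by simpa using hi : e ∉ C) (hIC (mem_biUnion.2 ⟨t, ht, het⟩))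
  · by_cases ht : t ∈ I
    · exact .inl (by simp [covPref, coverAllocation, ht])
    · refine .inr fun j hj hjt => ?_
      obtain ⟨rfl, ht'⟩ := coverAllocation_eq_inl σ hj hjt
      exact ht ht'

end Reduction

theorem stmt_10_general {E : Type*} [Fintype E] [DecidableEq E]
    (d : ℕ) (S : Fin d → Finset E) (q ℓ : ℕ)
    (hℓ : 0 < ℓ) (hqE : q ≤ Fintype.card E) (hℓd : ℓ ≤ d) :
    (∃ (D : Finset (E ⊕ Fin d))
        (ω : E ⊕ Fin d → Fin d ⊕ Fin (Fintype.card E - q + d - ℓ)),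
        D.card = Fintype.card E - q + d ∧ Set.InjOn ω ↑D ∧
        ∀ i ∈ D, (ω i ∈ covPref d (Fintype.card E - q + d - ℓ) S i ∨
          ∀ j ∈ D, ω j ∉ covPref d (Fintype.card E - q + d - ℓ) S i)) ↔
    (∃ I : Finset (Fin d), I.card = ℓ ∧ (I.biUnion S).card ≤ q) := by
  have : NeZero d := ⟨by omega⟩
  constructor
  · rintro ⟨D, ω, hD, hinj, hEF⟩
    have hℓI : ℓ ≤ #(D.image ω).toLeft := by
      have := card_le_card_toLeft_image_add hinj
      simp only [Fintype.card_fin] at this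
      omega
    have hcover := card_biUnion_toLeft_image_add_card_le S hinj hEF
    obtain ⟨I, hI, hIℓ⟩ := exists_subset_card_eq hℓI
    exact ⟨I, hIℓ,
      (card_le_card (biUnion_subset_biUnion_of_subset_left S hI)).trans (by omega)⟩
  · rintro ⟨I, hIℓ, hIq⟩
    obtain ⟨C, hIC, -, hCq⟩ := exists_subsuperset_card_eq (subset_univ _) hIq hqE
    have σ : {e // e ∉ C} ⊕ {t // t ∉ I} ≃ Fin (Fintype.card E - q + d - ℓ) :=
      Fintype.equivFinOfCardEq (by simp [Fintype.card_subtype_compl, hCq, hIℓ]; omega)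
    exact ⟨Cᶜ.disjSum univ, coverAllocation σ, by simp [card_compl, hCq],
      injOn_coverAllocation σ, isEnvyFree_coverAllocation S σ hIC⟩

/-- Correctness of the reduction from Minimum Coverage to ExistsPartialEF with binary
preferences: with `k = |E| − q + d` and `r = |E| − q + d − ℓ`, there exists a partial
allocation of houses to exactly `k` agents in which every allocated agent is envy-free
(an allocated agent `i` is envy-free if it receives a house in `A_i` or no allocated house
lies in `A_i`) if and only if there exists `I ⊆ {1,…,d}` with `|I| = ℓ` and
`|⋃_{t∈I} S_t| ≤ q`. -/
theorem stmt_10 {E : Type*} [Fintype E] [DecidableEq E]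
    (d : ℕ) (S : Fin d → Finset E) (q ℓ : ℕ)
    (hq : 0 < q) (hℓ : 0 < ℓ) (hqE : q ≤ Fintype.card E) (hℓd : ℓ ≤ d) :
    (∃ (D : Finset (E ⊕ Fin d))
        (ω : E ⊕ Fin d → Fin d ⊕ Fin (Fintype.card E - q + d - ℓ)),
        D.card = Fintype.card E - q + d ∧ Set.InjOn ω ↑D ∧
        ∀ i ∈ D, (ω i ∈ covPref d (Fintype.card E - q + d - ℓ) S i ∨
          ∀ j ∈ D, ω j ∉ covPref d (Fintype.card E - q + d - ℓ) S i)) ↔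
    (∃ I : Finset (Fin d), I.card = ℓ ∧ (I.biUnion S).card ≤ q) :=
  stmt_10_general d S q ℓ hℓ hqE hℓd
end

section
/- Consider the instance built from a Minimum Coverage input as follows: given a finite set E, subsets S_1, …, S_d ⊆ E, positive integers q ≤ |E| and ℓ ≤ d, set k = |E| − q + d and r = |E| − q + d − ℓ; the agents are { a_e : e ∈ E } ∪ { a*_t : t ∈ {1,…,d} }, the houses are { h*_t : t ∈ {1,…,d} } ∪ { h_s : s ∈ {1,…,r} }, with binary preferences A_{a_e} = { h*_t : e ∈ S_t } and A_{a*_t} = { h*_t }. If there exists a partial allocation with exactly k allocated agents in which every allocated agent is envy-free, then there exists such a partial allocation ω' additionally satisfying: for every t ∈ {1,…,d}, if house h*_t is allocated under ω', then ω'(a*_t) = h*_t. -/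
namespace HouseAllocation

open Finset Function

variable {α β γ : Type*} {P : α → Set β} {D : Finset α} {ω : α → β}

def IsEnvyFreeAllocation (P : α → Set β) (D : Finset α) (ω : α → β) : Prop :=
  Set.InjOn ω D ∧ ∀ i ∈ D, ω i ∈ P i ∨ ∀ j ∈ D, ω j ∉ P i

namespace IsEnvyFreeAllocation

theorem eq_of_pref_eq_singleton (h : IsEnvyFreeAllocation P D ω) {i : α} {b : β} (hi : i ∈ D)
    (hP : P i = {b}) (hb : ∃ j ∈ D, ω j = b) : ω i = b := by
  obtain ⟨j, hj, rfl⟩ := hb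
  rcases h.2 i hi with hpref | hnone
  · simpa [hP] using hpref
  · exact absurd (by simp [hP]) (hnone j hj)

theorem transfer [DecidableEq α] (h : IsEnvyFreeAllocation P D ω) {j a : α} (hj : j ∈ D)
    (ha : a ∉ D) (hpref : ω j ∈ P a) :
    IsEnvyFreeAllocation P (insert a (D.erase j)) (update ω a (ω j)) := by
  have ha' : a ∉ (D.erase j : Set α) := fun h' => ha (mem_of_mem_erase h')
  have hagree : Set.EqOn (update ω a (ω j)) ω (D.erase j) := fun i hi =>
    update_of_ne (by rintro rfl; exact ha' hi) _ _
  constructor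
  · rw [coe_insert, Set.injOn_insert ha', update_self, Set.image_congr hagree]
    refine ⟨(h.1.mono (coe_subset.2 (erase_subset j D))).congr hagree.symm, ?_⟩
    rw [h.1.mem_image_iff (coe_subset.2 (erase_subset j D)) hj]
    simp
  · intro i hi
    rcases mem_insert.1 hi with rfl | hi
    · exact Or.inl (by rwa [update_self])
    rw [hagree hi]
    refine (h.2 i (mem_of_mem_erase hi)).imp_right fun hnone k hk => ?_
    rcases mem_insert.1 hk with rfl | hk
    · rw [update_self]; exact hnone j hj
    · rw [hagree hk]; exact hnone k (mem_of_mem_erase hk)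

end IsEnvyFreeAllocation

section Unmatched

variable [Fintype γ] (σ : γ → α) (τ : γ → β)

open Classical in
noncomputable def unmatched (D : Finset α) (ω : α → β) : Finset γ :=
  {t | ¬(σ t ∈ D ∧ ω (σ t) = τ t)}

variable {σ τ}

theorem card_unmatched_update_lt [DecidableEq α] (hτ : Injective τ) {j : α} {t : γ}
    (hj : j ∈ D) (hjt : ω j = τ t) (ha : σ t ∉ D) :
    #(unmatched σ τ (insert (σ t) (D.erase j)) (update ω (σ t) (ω j))) <
      #(unmatched σ τ D ω) := by
  classical
  have hmatched : ∀ s, σ s ∈ D ∧ ω (σ s) = τ s →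
      σ s ∈ insert (σ t) (D.erase j) ∧ update ω (σ t) (ω j) (σ s) = τ s := by
    rintro s ⟨hs, hωs⟩
    have hne : σ s ≠ σ t := fun hst => ha (hst ▸ hs)
    have hsj : σ s ≠ j := by
      rintro rfl
      exact hne (congrArg σ (hτ (hωs.symm.trans hjt)))
    exact ⟨mem_insert_of_mem (mem_erase.2 ⟨hsj, hs⟩), by rw [update_of_ne hne, hωs]⟩
  refine (card_le_card fun s => ?_).trans_lt (card_erase_lt_of_mem (a := t) ?_)
  · simp only [unmatched, mem_filter, mem_univ, true_and, mem_erase]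
    intro hs
    refine ⟨fun hst => hs ?_, fun hs' => hs (hmatched s hs')⟩
    subst hst
    exact ⟨mem_insert_self _ _, by rw [update_self, hjt]⟩
  · simpa [unmatched] using fun ht => (ha ht).elim

end Unmatched

theorem IsEnvyFreeAllocation.exists_card_eq_of_singleton_prefs [Fintype γ] {σ : γ → α}
    {τ : γ → β} (hτ : Injective τ) (hP : ∀ t, P (σ t) = {τ t})
    (h : IsEnvyFreeAllocation P D ω) :
    ∃ (D' : Finset α) (ω' : α → β), D'.card = D.card ∧ IsEnvyFreeAllocation P D' ω' ∧
      ∀ t, (∃ j ∈ D', ω' j = τ t) → σ t ∈ D' ∧ ω' (σ t) = τ t := by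
  classical
  induction hn : #(unmatched σ τ D ω) using Nat.strong_induction_on generalizing D ω with
  | _ n ih =>
  by_cases hdone : ∀ t, (∃ j ∈ D, ω j = τ t) → σ t ∈ D ∧ ω (σ t) = τ t
  · exact ⟨D, ω, rfl, h, hdone⟩
  push Not at hdone
  obtain ⟨t, ⟨j, hj, hjt⟩, hunmatched⟩ := hdone
  have ha : σ t ∉ D := fun ha =>
    hunmatched ha (h.eq_of_pref_eq_singleton ha (hP t) ⟨j, hj, hjt⟩)
  obtain ⟨D', ω', hcard, hEF, hfinal⟩ :=
    ih _ (hn ▸ card_unmatched_update_lt hτ hj hjt ha)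
      (h.transfer hj ha (by rw [hjt, hP]; rfl)) rfl
  refine ⟨D', ω', hcard.trans ?_, hEF, hfinal⟩
  rw [card_insert_of_notMem fun h' => ha (mem_of_mem_erase h'), card_erase_add_one hj]

end HouseAllocation

open HouseAllocation in
theorem stmt_11_general {E : Type*} [Fintype E]
    (d : ℕ) (S : Fin d → Finset E) (q ℓ : ℕ)
    (hex : ∃ (D : Finset (E ⊕ Fin d))
        (ω : E ⊕ Fin d → Fin d ⊕ Fin (Fintype.card E - q + d - ℓ)),
        D.card = Fintype.card E - q + d ∧ Set.InjOn ω ↑D ∧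
        ∀ i ∈ D, (ω i ∈ covPref d (Fintype.card E - q + d - ℓ) S i ∨
          ∀ j ∈ D, ω j ∉ covPref d (Fintype.card E - q + d - ℓ) S i)) :
    ∃ (D' : Finset (E ⊕ Fin d))
        (ω' : E ⊕ Fin d → Fin d ⊕ Fin (Fintype.card E - q + d - ℓ)),
        D'.card = Fintype.card E - q + d ∧ Set.InjOn ω' ↑D' ∧
        (∀ i ∈ D', (ω' i ∈ covPref d (Fintype.card E - q + d - ℓ) S i ∨
          ∀ j ∈ D', ω' j ∉ covPref d (Fintype.card E - q + d - ℓ) S i)) ∧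
        (∀ t : Fin d, (∃ j ∈ D', ω' j = Sum.inl t) →
          (Sum.inr t ∈ D' ∧ ω' (Sum.inr t) = Sum.inl t)) := by
  obtain ⟨D, ω, hcard, hEF⟩ := hex
  obtain ⟨D', ω', hcard', ⟨hinj', hEF'⟩, hstars⟩ :=
    IsEnvyFreeAllocation.exists_card_eq_of_singleton_prefs (σ := Sum.inr) Sum.inl_injective
      (fun _ => rfl) hEF
  exact ⟨D', ω', hcard'.trans hcard, hinj', hEF', hstars⟩

/-- In the instance built from a Minimum Coverage input (with `k = |E| − q + d` and
`r = |E| − q + d − ℓ`), if there is a partial allocation with exactly `k` allocated agents in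
which every allocated agent is envy-free, then there is such a partial allocation which
additionally allocates each allocated house `h*_t` to the agent `a*_t`. -/
theorem stmt_11 {E : Type*} [Fintype E] [DecidableEq E]
    (d : ℕ) (S : Fin d → Finset E) (q ℓ : ℕ)
    (hq : 0 < q) (hℓ : 0 < ℓ) (hqE : q ≤ Fintype.card E) (hℓd : ℓ ≤ d)
    (hex : ∃ (D : Finset (E ⊕ Fin d))
        (ω : E ⊕ Fin d → Fin d ⊕ Fin (Fintype.card E - q + d - ℓ)),
        D.card = Fintype.card E - q + d ∧ Set.InjOn ω ↑D ∧
        ∀ i ∈ D, (ω i ∈ covPref d (Fintype.card E - q + d - ℓ) S i ∨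
          ∀ j ∈ D, ω j ∉ covPref d (Fintype.card E - q + d - ℓ) S i)) :
    ∃ (D' : Finset (E ⊕ Fin d))
        (ω' : E ⊕ Fin d → Fin d ⊕ Fin (Fintype.card E - q + d - ℓ)),
        D'.card = Fintype.card E - q + d ∧ Set.InjOn ω' ↑D' ∧
        (∀ i ∈ D', (ω' i ∈ covPref d (Fintype.card E - q + d - ℓ) S i ∨
          ∀ j ∈ D', ω' j ∉ covPref d (Fintype.card E - q + d - ℓ) S i)) ∧
        (∀ t : Fin d, (∃ j ∈ D', ω' j = Sum.inl t) →
          (Sum.inr t ∈ D' ∧ ω' (Sum.inr t) = Sum.inl t)) :=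
  stmt_11_general d S q ℓ hex
end

section
/- Let H be a finite set partitioned as A ⊎ B with enumerations A = {a_1, …, a_p} and B = {b_1, …, b_r}. Consider the family L of p + r strict linear orders on H defined by: for each j ∈ {1,…,p}, the order a_j ≻ a_1 ≻ … ≻ a_{j−1} ≻ a_{j+1} ≻ … ≻ a_p ≻ b_1 ≻ … ≻ b_r; and for each j ∈ {1,…,r}, the order a_1 ≻ … ≻ a_p ≻ b_j ≻ b_1 ≻ … ≻ b_{j−1} ≻ b_{j+1} ≻ … ≻ b_r. Then for every W ⊆ H and every h ∈ W, there exists ≻ ∈ L with h ≻ w for all w ∈ W \ {h} if and only if h ∈ A or W ∩ A = ∅. (That is, an agent with binary preferences (A,B) is envy-free at house h among allocated houses W exactly when some list in L ranks h above all other houses of W.) -/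
/-- Ranking key of the `j`-th list of the first kind (`j ∈ Fin p`):
`a_j ≻ a_1 ≻ … ≻ a_{j−1} ≻ a_{j+1} ≻ … ≻ a_p ≻ b_1 ≻ … ≻ b_q`
(smaller key means more preferred; here `A = Fin p` are the `Sum.inl`s and `B = Fin q`
the `Sum.inr`s). -/
def keyA (p q : ℕ) (j : Fin p) : Fin p ⊕ Fin q → ℕ :=
  Sum.elim (fun i => if i = j then 0 else i.val + 1) (fun s => p + 2 + s.val)

/-- Ranking key of the `j`-th list of the second kind (`j ∈ Fin q`):
`a_1 ≻ … ≻ a_p ≻ b_j ≻ b_1 ≻ … ≻ b_{j−1} ≻ b_{j+1} ≻ … ≻ b_q`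
(smaller key means more preferred). -/
def keyB (p q : ℕ) (j : Fin q) : Fin p ⊕ Fin q → ℕ :=
  Sum.elim (fun i => i.val) (fun s => if s = j then p else p + 1 + s.val)

/-! Every list of `L` ranks all of `A` above all of `B`, so a house of `B` can beat every other
house of `W` only when `W ∩ A = ∅`. Conversely `a_j` tops the `j`-th list of the first kind,
and when `W ∩ A = ∅` the house `b_j` beats all of `W` in the `j`-th list of the second kind. -/

def StrictLinearOrder.ofKey {H β : Type*} [LinearOrder β] (f : H → β)
    (hf : Function.Injective f) : StrictLinearOrder H :=
  ⟨fun x y => f x < f y, hf.isStrictTotalOrder_onFun (· < ·)⟩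

section Keys

variable {p q : ℕ}

lemma keyA_injective (j : Fin p) : Function.Injective (keyA p q j) := by
  rintro (i | s) (i' | s') hkey <;> simp only [keyA, Sum.elim_inl, Sum.elim_inr] at hkey <;> grind

lemma keyB_injective (j : Fin q) : Function.Injective (keyB p q j) := by
  rintro (i | s) (i' | s') hkey <;> simp only [keyB, Sum.elim_inl, Sum.elim_inr] at hkey <;> grind

lemma keyA_inl_lt_inr (j i : Fin p) (s : Fin q) :
    keyA p q j (Sum.inl i) < keyA p q j (Sum.inr s) := by
  simp only [keyA, Sum.elim_inl, Sum.elim_inr]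
  split_ifs <;> omega

lemma keyB_inl_lt_inr (j : Fin q) (i : Fin p) (s : Fin q) :
    keyB p q j (Sum.inl i) < keyB p q j (Sum.inr s) := by
  simp only [keyB, Sum.elim_inl, Sum.elim_inr]
  split_ifs <;> omega

lemma keyA_self_lt (j : Fin p) {w : Fin p ⊕ Fin q} (hw : w ≠ Sum.inl j) :
    keyA p q j (Sum.inl j) < keyA p q j w := by
  rcases w with i | s
  · simp only [keyA, Sum.elim_inl, ↓reduceIte, if_neg (fun h => hw (congrArg Sum.inl h))]
    omega
  · exact keyA_inl_lt_inr j j s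

lemma keyB_self_lt (j s : Fin q) (hs : s ≠ j) :
    keyB p q j (Sum.inr j) < keyB p q j (Sum.inr s) := by
  simp only [keyB, Sum.elim_inr, ↓reduceIte, if_neg hs]
  omega

end Keys

theorem stmt_12_general (p q : ℕ) (W : Set (Fin p ⊕ Fin q)) (h : Fin p ⊕ Fin q) :
    (∃ r : StrictLinearOrder (Fin p ⊕ Fin q),
        ((∃ j : Fin p, r.1 = fun x y => keyA p q j x < keyA p q j y) ∨
         (∃ j : Fin q, r.1 = fun x y => keyB p q j x < keyB p q j y)) ∧
        ∀ w ∈ W, w ≠ h → r.1 h w) ↔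
    ((∃ i : Fin p, h = Sum.inl i) ∨ ∀ w ∈ W, ∀ i : Fin p, w ≠ Sum.inl i) := by
  rcases h with i | s
  · exact iff_of_true ⟨.ofKey _ (keyA_injective i), Or.inl ⟨i, rfl⟩, fun w _ hw => keyA_self_lt i hw⟩
      (Or.inl ⟨i, rfl⟩)
  rw [or_iff_right (by rintro ⟨i, ⟨⟩⟩)]
  constructor
  · rintro ⟨r, hr, htop⟩ w hw i rfl
    have hi := htop _ hw Sum.inl_ne_inr
    rcases hr with ⟨j, hj⟩ | ⟨j, hj⟩ <;> rw [hj] at hi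
    · exact (keyA_inl_lt_inr j i s).not_gt hi
    · exact (keyB_inl_lt_inr j i s).not_gt hi
  · intro hB
    refine ⟨.ofKey _ (keyB_injective s), Or.inr ⟨s, rfl⟩, ?_⟩
    rintro (i | s') hw hws
    · exact absurd rfl (hB _ hw i)
    · exact keyB_self_lt s s' fun h => hws (congrArg Sum.inr h)

/-- With `H = Fin p ⊕ Fin q` (houses in `A` are the left summands, houses in `B` the right
summands) and the family `L` of `p + q` strict linear orders given by the keys `keyA` and
`keyB`, for every `W ⊆ H` and `h ∈ W` there is an order in `L` ranking `h` above all other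
elements of `W` if and only if `h ∈ A` or `W ∩ A = ∅`. -/
theorem stmt_12 (p q : ℕ) (W : Set (Fin p ⊕ Fin q)) (h : Fin p ⊕ Fin q) (hW : h ∈ W) :
    (∃ r : StrictLinearOrder (Fin p ⊕ Fin q),
        ((∃ j : Fin p, r.1 = fun x y => keyA p q j x < keyA p q j y) ∨
         (∃ j : Fin q, r.1 = fun x y => keyB p q j x < keyB p q j y)) ∧
        ∀ w ∈ W, w ≠ h → r.1 h w) ↔
    ((∃ i : Fin p, h = Sum.inl i) ∨ ∀ w ∈ W, ∀ i : Fin p, w ≠ Sum.inl i) :=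
  stmt_12_general p q W h
end

section
/- Let N be a finite set of agents, each with a total preorder ≿_i on a finite set H, and let A be an N×N binary matrix with A_{ii} = 1 for all i. Say an injective allocation ω : N → H satisfies A if for all agents i, j: ω(i) ≿_i ω(j), and moreover ω(i) ≻_i ω(j) strictly whenever A_{ij} = 0. Let H' ⊆ H and suppose every allocation satisfying A has image contained in H'. Define the bipartite graph G on parts N and H' with an edge between agent i and house h exactly when h is a ≿_i-maximum of H' and there is no agent j ≠ i with A_{j,i} = 0 for which h is a ≿_j-maximum of H'. Suppose Z ⊆ N satisfies |Z| > |N_G(Z)| (where N_G(Z) is the set of houses adjacent in G to some agent of Z) and Z is inclusion-minimal with this property. Let P(Z) = { h ∈ H' : h is a ≿_i-maximum of H' for some i ∈ Z }. Then every allocation satisfying A has image contained in H' \ P(Z). -/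
/-- An injective allocation `ω` satisfies the envy-matrix `A` (with respect to weak preferences
`R i`) if `ω i ≿_i ω j` for all agents `i, j`, and moreover `ω i ≻_i ω j` strictly whenever
`A i j = false`. -/
def SatisfiesEnvyMatrix {N H : Type*} (R : N → H → H → Prop) (A : N → N → Bool)
    (ω : N → H) : Prop :=
  Function.Injective ω ∧
  (∀ i j : N, R i (ω i) (ω j)) ∧
  (∀ i j : N, A i j = false → R i (ω i) (ω j) ∧ ¬ R i (ω j) (ω i))

/-- `h` is a `≿_i`-maximum of `H'`. -/
def isTopChoice {N H : Type*} (R : N → H → H → Prop) (H' : Set H) (i : N) (h : H) : Prop :=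
  h ∈ H' ∧ ∀ h' ∈ H', R i h h'

/-- The edge relation of the bipartite graph `G` on parts `N` and `H'`: agent `i` is joined to
house `h` iff `h` is a `≿_i`-maximum of `H'` and there is no agent `j ≠ i` with `A j i = 0`
for which `h` is a `≿_j`-maximum of `H'`. -/
def EMedge {N H : Type*} (R : N → H → H → Prop) (A : N → N → Bool) (H' : Set H)
    (i : N) (h : H) : Prop :=
  isTopChoice R H' i h ∧ ¬ ∃ j : N, j ≠ i ∧ A j i = false ∧ isTopChoice R H' j h

section

variable {N H : Type*}

theorem ncard_neighbors_sdiff_lt [Finite H] {E : N → H → Prop} {Z Z₀ : Set N} {f : N → H}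
    (hZ : {h | ∃ i ∈ Z, E i h}.ncard < Z.ncard) (hZ₀ : Z₀ ⊆ Z) (hf : Set.InjOn f Z₀)
    (hfE : ∀ k ∈ Z₀, E k (f k)) (hdisj : Disjoint {h | ∃ i ∈ Z \ Z₀, E i h} (f '' Z₀)) :
    {h | ∃ i ∈ Z \ Z₀, E i h}.ncard < (Z \ Z₀).ncard := by
  have hsub : {h | ∃ i ∈ Z \ Z₀, E i h} ∪ f '' Z₀ ⊆ {h | ∃ i ∈ Z, E i h} := by
    rintro h (⟨k, hk, he⟩ | ⟨k, hk, rfl⟩)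
    exacts [⟨k, hk.1, he⟩, ⟨k, hZ₀ hk, hfE k hk⟩]
  have hle := Set.ncard_le_ncard hsub
  rw [Set.ncard_union_eq hdisj, hf.ncard_image] at hle
  have hsplit := Set.ncard_sdiff_add_ncard_of_subset hZ₀ (Set.finite_of_ncard_pos (by omega))
  omega

variable {R : N → H → H → Prop} {A : N → N → Bool} {H' : Set H} {ω : N → H}

theorem isTopChoice.of_rel {i : N} {h h' : H} (htrans : Transitive (R i))
    (hh : isTopChoice R H' i h) (hh' : h' ∈ H') (hrel : R i h' h) : isTopChoice R H' i h' :=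
  ⟨hh', fun _ hx => htrans hrel (hh.2 _ hx)⟩

theorem SatisfiesEnvyMatrix.isTopChoice_self (hω : SatisfiesEnvyMatrix R A ω) {i k : N}
    (htrans : Transitive (R k)) (hk : ω k ∈ H') (htop : isTopChoice R H' k (ω i)) :
    isTopChoice R H' k (ω k) :=
  htop.of_rel htrans hk (hω.2.1 k i)

theorem SatisfiesEnvyMatrix.emedge_self (hω : SatisfiesEnvyMatrix R A ω) (hmem : ∀ m, ω m ∈ H')
    {k : N} (hk : isTopChoice R H' k (ω k)) : EMedge R A H' k (ω k) :=
  ⟨hk, fun ⟨m, _, hA, hm⟩ => (hω.2.2 m k hA).2 (hm.2 (ω m) (hmem m))⟩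

end

theorem stmt_14_general {N H : Type*} [Fintype H]
    (R : N → H → H → Prop) (hR : ∀ i, IsTotalPreorderRel (R i))
    (A : N → N → Bool)
    (H' : Set H)
    (hH' : ∀ ω : N → H, SatisfiesEnvyMatrix R A ω → ∀ i, ω i ∈ H')
    (Z : Set N)
    (hZ : ({h : H | ∃ i ∈ Z, EMedge R A H' i h} : Set H).ncard < Z.ncard)
    (hmin : ∀ Z' : Set N, Z' ⊂ Z →
        ¬ (({h : H | ∃ i ∈ Z', EMedge R A H' i h} : Set H).ncard < Z'.ncard))
    (ω : N → H) (hω : SatisfiesEnvyMatrix R A ω) :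
    ∀ i : N, ω i ∈ H' \ {h ∈ H' | ∃ j ∈ Z, isTopChoice R H' j h} := by
  intro i
  have hmem := hH' ω hω
  refine ⟨hmem i, ?_⟩
  rintro ⟨-, j, hjZ, htop⟩
  set Z₀ : Set N := {k ∈ Z | isTopChoice R H' k (ω k)}
  have hjZ₀ : j ∈ Z₀ := ⟨hjZ, hω.isTopChoice_self (hR j).2.1 (hmem j) htop⟩
  have hdisj : Disjoint {h | ∃ k ∈ Z \ Z₀, EMedge R A H' k h} (ω '' Z₀) := by
    rw [Set.disjoint_left]
    rintro _ ⟨k', ⟨hk'Z, hk'Z₀⟩, hedge⟩ ⟨k, -, rfl⟩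
    exact hk'Z₀ ⟨hk'Z, hω.isTopChoice_self (hR k').2.1 (hmem k') hedge.1⟩
  exact hmin (Z \ Z₀) (Set.sdiff_ssubset_left_iff.mpr ⟨j, hjZ, hjZ₀⟩)
    (ncard_neighbors_sdiff_lt hZ (Set.sep_subset _ _) hω.1.injOn
      (fun k hk => hω.emedge_self hmem hk.2) hdisj)

/-- Key lemma for the AllocSatisfyingEnvyMatrix algorithm: suppose every allocation satisfying
the envy-matrix `A` has image contained in `H'`, and `Z` is an inclusion-minimal Hall violator
of the bipartite graph `G` (i.e. `|Z| > |N_G(Z)|` and no proper subset has this property).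
Then every allocation satisfying `A` has image contained in `H' \ P(Z)`, where `P(Z)` is the
set of houses of `H'` that are a `≿_i`-maximum of `H'` for some `i ∈ Z`. -/
theorem stmt_14 {N H : Type*} [Fintype N] [Fintype H]
    (R : N → H → H → Prop) (hR : ∀ i, IsTotalPreorderRel (R i))
    (A : N → N → Bool) (hdiag : ∀ i, A i i = true)
    (H' : Set H)
    (hH' : ∀ ω : N → H, SatisfiesEnvyMatrix R A ω → ∀ i, ω i ∈ H')
    (Z : Set N)
    (hZ : ({h : H | ∃ i ∈ Z, EMedge R A H' i h} : Set H).ncard < Z.ncard)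
    (hmin : ∀ Z' : Set N, Z' ⊂ Z →
        ¬ (({h : H | ∃ i ∈ Z', EMedge R A H' i h} : Set H).ncard < Z'.ncard))
    (ω : N → H) (hω : SatisfiesEnvyMatrix R A ω) :
    ∀ i : N, ω i ∈ H' \ {h ∈ H' | ∃ j ∈ Z, isTopChoice R H' j h} :=
  stmt_14_general R hR A H' hH' Z hZ hmin ω hω
end

section
/- Let G be a simple graph with vertex set {v_1, …, v_m} and let k ≤ m. Call a complete asymmetric relation R on {h_1, …, h_m} (for all distinct p, q exactly one of h_p R h_q and h_q R h_p holds) a realizable preference if h_i R h_j whenever i < j and v_i v_j is an edge of G. Then the following are equivalent: (a) there exist an injective map ω : {1,…,k} → {h_1,…,h_m} and realizable preferences R_1, …, R_k such that ω(a) R_a ω(b) for all a ∈ {1,…,k} and all b ≠ a; (b) G has an independent set of size k. (This is the correctness of the reduction from Independent Set to ExistsPossiblyEF under the pairwise probability model, where for each agent independently h_i is preferred to h_j with probability 1 if i < j and v_i v_j ∈ E(G), and with probability 1/2 otherwise, so that a realizable preference is precisely a realization of positive probability.) -/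
/-!
If two allocated houses `ω a < ω b` were adjacent, agent `b` would be forced to rank `ω a` above
its own house `ω b`; so the allocated houses form an independent set. Conversely, given an
independent set `s` listed as `x_1 < ⋯ < x_k`, agent `a` receives `x_a` and ranks the houses by
index, except that `x_a` is moved to the top among the elements of `s`. Only pairs inside `s`
are reordered, and these carry no edge.
-/

/-- A realizable preference (a realization of positive probability in the pairwise probability
model built from the graph `G`): a complete asymmetric relation `R` on the houses
`h_1, …, h_m` (for all distinct `p, q`, exactly one of `R p q` and `R q p` holds) such that
`h_i R h_j` whenever `i < j` and `v_i v_j` is an edge of `G`. -/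
def RealizablePref {m : ℕ} (G : SimpleGraph (Fin m)) (R : Fin m → Fin m → Prop) : Prop :=
  (∀ p q : Fin m, p ≠ q → (R p q ↔ ¬ R q p)) ∧
  (∀ i j : Fin m, i < j → G.Adj i j → R i j)

theorem RealizablePref.not_adj_of_rel {m : ℕ} {G : SimpleGraph (Fin m)}
    {R : Fin m → Fin m → Prop} (hR : RealizablePref G R) {p q : Fin m} (hpq : p < q)
    (hqp : R q p) : ¬ G.Adj p q := fun hadj =>
  (hR.1 p q hpq.ne).mp (hR.2 p q hpq hadj) hqp

theorem isIndependent_image_of_envyFree {m k : ℕ} {G : SimpleGraph (Fin m)} {ω : Fin k → Fin m}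
    {R : Fin k → Fin m → Fin m → Prop}
    (hR : ∀ a, RealizablePref G (R a)) (hef : ∀ a b : Fin k, b ≠ a → R a (ω a) (ω b)) :
    ∀ v ∈ Finset.univ.image ω, ∀ w ∈ Finset.univ.image ω, ¬ G.Adj v w := by
  have key : ∀ a b, ω a < ω b → ¬ G.Adj (ω a) (ω b) := fun a b hlt =>
    (hR b).not_adj_of_rel hlt (hef b a fun h => hlt.ne (congrArg ω h))
  simp only [Finset.mem_image, Finset.mem_univ, true_and]
  rintro _ ⟨a, rfl⟩ _ ⟨b, rfl⟩ hadj
  rcases lt_or_gt_of_ne hadj.ne with hlt | hgt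
  · exact key a b hlt hadj
  · exact key b a hgt hadj.symm

section PromoteWithin

variable {α : Type*} [LinearOrder α]

def promoteWithin (s : Finset α) (x p q : α) : Prop :=
  if p ∈ s ∧ q ∈ s then p = x ∨ (q ≠ x ∧ p < q) else p < q

theorem promoteWithin_iff_not {s : Finset α} {x p q : α} (hpq : p ≠ q) :
    promoteWithin s x p q ↔ ¬ promoteWithin s x q p := by
  unfold promoteWithin
  split_ifs <;> grind

theorem promoteWithin_self_left {s : Finset α} {x y : α} (hx : x ∈ s) (hy : y ∈ s) :
    promoteWithin s x x y := by
  rw [promoteWithin, if_pos ⟨hx, hy⟩]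
  exact Or.inl rfl

end PromoteWithin

theorem realizablePref_promoteWithin {m : ℕ} {G : SimpleGraph (Fin m)} {s : Finset (Fin m)}
    (hs : ∀ v ∈ s, ∀ w ∈ s, ¬ G.Adj v w) (x : Fin m) :
    RealizablePref G (promoteWithin s x) := by
  refine ⟨fun p q => promoteWithin_iff_not, fun i j hij hadj => ?_⟩
  rw [promoteWithin, if_neg fun h => hs i h.1 j h.2 hadj]
  exact hij

theorem stmt_15_general (m k : ℕ) (G : SimpleGraph (Fin m)) :
    (∃ ω : Fin k → Fin m, Function.Injective ω ∧
        ∃ R : Fin k → (Fin m → Fin m → Prop),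
          (∀ a, RealizablePref G (R a)) ∧
          (∀ a b : Fin k, b ≠ a → R a (ω a) (ω b))) ↔
    (∃ s : Finset (Fin m), s.card = k ∧ ∀ v ∈ s, ∀ w ∈ s, ¬ G.Adj v w) := by
  constructor
  · rintro ⟨ω, hω, R, hR, hef⟩
    refine ⟨Finset.univ.image ω, ?_, isIndependent_image_of_envyFree hR hef⟩
    rw [Finset.card_image_of_injective _ hω, Finset.card_univ, Fintype.card_fin]
  · rintro ⟨s, hcard, hs⟩
    let e := s.orderIsoOfFin hcard
    refine ⟨fun a => e a, fun a b hab => e.injective (Subtype.ext hab),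
      fun a => promoteWithin s (e a), fun a => realizablePref_promoteWithin hs _,
      fun a b _ => promoteWithin_self_left (e a).2 (e b).2⟩

/-- Correctness of the reduction from Independent Set to ExistsPossiblyEF under the pairwise
probability model: there exist an injective allocation `ω` of houses to the `k` agents and
realizable preferences `R a` for each agent `a` under which every agent's own house beats
every other allocated house, if and only if `G` has an independent set of size `k`. -/
theorem stmt_15 (m k : ℕ) (hk : k ≤ m) (G : SimpleGraph (Fin m)) :
    (∃ ω : Fin k → Fin m, Function.Injective ω ∧
        ∃ R : Fin k → (Fin m → Fin m → Prop),
          (∀ a, RealizablePref G (R a)) ∧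
          (∀ a b : Fin k, b ≠ a → R a (ω a) (ω b))) ↔
    (∃ s : Finset (Fin m), s.card = k ∧ ∀ v ∈ s, ∀ w ∈ s, ¬ G.Adj v w) :=
  stmt_15_general m k G
end
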